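/- (Bellman equation for the counting-reward value function.) Consider a deterministic transition system on a type S with step relation step : S → S → Prop and goal set G ⊆ S. For every state s ∉ G, the optimal counting-reward value satisfies V_cnt*(s) = −1 + sSup { V_cnt*(s') : step s s' }, where the supremum over successors is computed in EReal (so it equals ⊥, and hence V_cnt*(s) = ⊥, when s has no successor or no successor can reach the goal). Together with V_cnt* = −h*, this expresses that solving the Bellman equation for the optimal value function with the counting reward is equivalent to solving the Bellman equation for h*. -/

import Mathlib

/-- `s` reaches the goal set `G` in exactly `n` steps of the relation `step`. -/
def ReachesIn {S : Type*} (step : S → S → Prop) (G : Set S) (s : S) (n : ℕ) : Prop :=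
  ∃ f : Fin (n + 1) → S, f 0 = s ∧
    (∀ i : Fin n, step (f i.castSucc) (f i.succ)) ∧ f (Fin.last n) ∈ G

/-- `D(s)`: the set of numbers of steps in which `s` can reach the goal. -/
def DistSet {S : Type*} (step : S → S → Prop) (G : Set S) (s : S) : Set ℕ :=
  {n | ReachesIn step G s n}

/-- The optimal distance heuristic `h*`, valued in `ℕ∞` (`⊤` if the goal is unreachable). -/
noncomputable def hStar {S : Type*} (step : S → S → Prop) (G : Set S) (s : S) : ℕ∞ :=
  sInf ((fun n : ℕ => (n : ℕ∞)) '' DistSet step G s)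

/-- The optimal binary-reward value `V_bin*` (meaningful on states with `D(s) ≠ ∅`). -/
noncomputable def Vbin {S : Type*} (step : S → S → Prop) (G : Set S) (γ : ℝ) (s : S) : ℝ :=
  sSup {x : ℝ | ∃ n ∈ DistSet step G s, x = γ ^ ((n : ℤ) - 1)}

/-- The optimal counting-reward value `V_cnt*`, valued in `EReal`. -/
noncomputable def Vcnt {S : Type*} (step : S → S → Prop) (G : Set S) (s : S) : EReal :=
  sSup {x : EReal | ∃ n ∈ DistSet step G s, x = -(n : EReal)}

lemma reaches_zero_iff {S : Type*} (step : S → S → Prop) (G : Set S) (s : S) :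
    ReachesIn step G s 0 ↔ s ∈ G := by
  constructor
  · rintro ⟨f, h0, -, hG⟩
    rwa [show Fin.last 0 = 0 from rfl, h0] at hG
  · intro h
    exact ⟨fun _ => s, rfl, fun i => i.elim0, h⟩

lemma reaches_succ_iff {S : Type*} (step : S → S → Prop) (G : Set S) (s : S) (n : ℕ) :
    ReachesIn step G s (n + 1) ↔ ∃ s', step s s' ∧ ReachesIn step G s' n := by
  constructor
  · rintro ⟨f, h0, hstep, hG⟩
    refine ⟨f 1, ?_, fun i => f i.succ, rfl, fun i => ?_, ?_⟩
    · have := hstep 0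
      simpa [h0, Fin.castSucc_zero] using this
    · have := hstep i.succ
      simpa only [Fin.succ_castSucc] using this
    · simpa [Fin.succ_last] using hG
  · rintro ⟨s', hst, g, h0, hsteps, hG⟩
    refine ⟨Fin.cases s g, ?_, fun i => ?_, ?_⟩
    · simp
    · induction i using Fin.cases with
      | zero =>
        simp only [Fin.castSucc_zero, Fin.cases_zero, Fin.cases_succ, h0]
        exact hst
      | succ j =>
        simp only [← Fin.succ_castSucc, Fin.cases_succ]
        exact hsteps j
    · simp only [← Fin.succ_last, Fin.cases_succ]
      exact hG

lemma neg_one_coe : (-1 : EReal) = ((-1 : ℝ) : EReal) := by rw [EReal.coe_neg, EReal.coe_one]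

lemma neg_nat_succ (m : ℕ) : -(((m + 1 : ℕ)) : EReal) = -1 + -((m : ℕ) : EReal) := by
  have h : (((m + 1 : ℕ)) : EReal) = ((m : ℕ) : EReal) + 1 := by norm_cast
  have hb : ((m : ℕ) : EReal) ≠ ⊥ := by
    rw [show ((m : ℕ) : EReal) = ((m : ℝ) : EReal) by norm_cast]; exact EReal.coe_ne_bot _
  have ht : ((m : ℕ) : EReal) ≠ ⊤ := by
    rw [show ((m : ℕ) : EReal) = ((m : ℝ) : EReal) by norm_cast]; exact EReal.coe_ne_top _
  rw [h, EReal.neg_add (.inl hb) (.inl ht), sub_eq_add_neg, add_comm]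

lemma one_add_neg_one_add (x : EReal) : (1 : EReal) + (-1 + x) = x := by
  induction x using EReal.rec with
  | bot => simp
  | top =>
    rw [EReal.add_top_of_ne_bot (by rw [neg_one_coe]; exact EReal.coe_ne_bot _),
      EReal.add_top_of_ne_bot
        (by rw [show (1 : EReal) = ((1 : ℝ) : EReal) by norm_cast]; exact EReal.coe_ne_bot _)]
  | coe x =>
    rw [neg_one_coe, show ((-1 : ℝ) : EReal) + (x : ℝ) = ((-1 + x : ℝ) : EReal) by norm_cast,
      show (1 : EReal) = ((1 : ℝ) : EReal) by norm_cast, ← EReal.coe_add]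
    norm_num

lemma neg_one_add_one_add (x : EReal) : (-1 : EReal) + (1 + x) = x := by
  induction x using EReal.rec with
  | bot => simp
  | top =>
    rw [EReal.add_top_of_ne_bot
        (by rw [show (1 : EReal) = ((1 : ℝ) : EReal) by norm_cast]; exact EReal.coe_ne_bot _),
      EReal.add_top_of_ne_bot (by rw [neg_one_coe]; exact EReal.coe_ne_bot _)]
  | coe x =>
    rw [show (1 : EReal) + (x : ℝ) = ((1 + x : ℝ) : EReal) by norm_cast,
      neg_one_coe, ← EReal.coe_add]
    norm_num

theorem stmt_8 {S : Type*} (step : S → S → Prop) (G : Set S) (s : S) (hs : s ∉ G) :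
    Vcnt step G s = -1 + sSup {x : EReal | ∃ s' : S, step s s' ∧ x = Vcnt step G s'} := by
  set B : Set EReal := {x : EReal | ∃ s' : S, step s s' ∧ x = Vcnt step G s'} with hB
  apply le_antisymm
  · apply sSup_le
    rintro x ⟨n, hn, rfl⟩
    obtain ⟨m, rfl⟩ : ∃ m, n = m + 1 := by
      cases n with
      | zero => exact absurd ((reaches_zero_iff step G s).mp hn) hs
      | succ m => exact ⟨m, rfl⟩
    obtain ⟨s', hst, hm⟩ := (reaches_succ_iff step G s m).mp hn
    have h1 : -((m : ℕ) : EReal) ≤ Vcnt step G s' := le_sSup ⟨m, hm, rfl⟩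
    have h2 : Vcnt step G s' ≤ sSup B := le_sSup ⟨s', hst, rfl⟩
    calc -(((m + 1 : ℕ)) : EReal) = -1 + -((m : ℕ) : EReal) := neg_nat_succ m
      _ ≤ -1 + sSup B := add_le_add_right (h1.trans h2) _
  · have key : sSup B ≤ 1 + Vcnt step G s := by
      apply sSup_le
      rintro x ⟨s', hst, rfl⟩
      apply sSup_le
      rintro y ⟨m, hm, rfl⟩
      have hmem : -(((m + 1 : ℕ)) : EReal) ≤ Vcnt step G s :=
        le_sSup ⟨m + 1, (reaches_succ_iff step G s m).mpr ⟨s', hst, hm⟩, rfl⟩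
      calc -((m : ℕ) : EReal) = 1 + (-1 + -((m : ℕ) : EReal)) :=
            (one_add_neg_one_add _).symm
        _ = 1 + -(((m + 1 : ℕ)) : EReal) := by rw [neg_nat_succ]
        _ ≤ 1 + Vcnt step G s := add_le_add_right hmem _
    calc -1 + sSup B ≤ -1 + (1 + Vcnt step G s) := add_le_add_right key _
      _ = Vcnt step G s := neg_one_add_one_add _
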